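/- Let A be a symmetric 3×3 matrix, Ā := (tr(A)I - A)/2, and let X in SO(3) have unit quaternion representation (η, ε). Then ψ(AX) = 2(ηI - [ε]_×)Āε. -/
import Mathlib


open Matrix

noncomputable def skew (u : Fin 3 → ℝ) : Matrix (Fin 3) (Fin 3) ℝ :=
  !![0, -u 2, u 1; u 2, 0, -u 0; -u 1, u 0, 0]

/-- `ψ(M) = [P_a(M)]_⊗`, the vector of the anti-symmetric part of `M`. -/
noncomputable def psi (M : Matrix (Fin 3) (Fin 3) ℝ) : Fin 3 → ℝ :=
  ![(M 2 1 - M 1 2) / 2, (M 0 2 - M 2 0) / 2, (M 1 0 - M 0 1) / 2]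

/-- `Ā = (tr(A)·I - A)/2`. -/
noncomputable def barM (A : Matrix (Fin 3) (Fin 3) ℝ) : Matrix (Fin 3) (Fin 3) ℝ :=
  (1 / 2 : ℝ) • (A.trace • (1 : Matrix (Fin 3) (Fin 3) ℝ) - A)

theorem psi_quaternion (A X : Matrix (Fin 3) (Fin 3) ℝ) (η : ℝ) (ε : Fin 3 → ℝ)
    (hA : Aᵀ = A)
    (hq : η ^ 2 + ε ⬝ᵥ ε = 1)
    (hX : X = 1 + (2 : ℝ) • (skew ε) ^ 2 + (2 * η) • skew ε) :
    psi (A * X) = (2 : ℝ) • ((η • (1 : Matrix (Fin 3) (Fin 3) ℝ) - skew ε) *ᵥ (barM A *ᵥ ε)) := by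
  have h01 : A 0 1 = A 1 0 := by
    simpa [Matrix.transpose_apply] using (congrFun (congrFun hA 0) 1).symm
  have h02 : A 0 2 = A 2 0 := by
    simpa [Matrix.transpose_apply] using (congrFun (congrFun hA 0) 2).symm
  have h12 : A 1 2 = A 2 1 := by
    simpa [Matrix.transpose_apply] using (congrFun (congrFun hA 1) 2).symm
  subst hX
  funext i
  fin_cases i <;>
    simp [psi, skew, barM, Matrix.mul_apply, Matrix.mulVec, dotProduct,
      Fin.sum_univ_three, pow_two, Matrix.trace, Matrix.diag,
      Matrix.one_apply, Matrix.add_apply, Matrix.smul_apply, Matrix.sub_apply,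
      h01, h02, h12] <;>
    ring
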